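/- arXiv:0902.2887 — 3 statements merged into one kernel-verified Lean document; each statement's English description precedes it below -/
import Mathlib

section
/- Let J ⊆ R be a binomial ideal, let a ∈ ℤ^{s+r} be a tuple of weights, and let t ∈ K with t ≠ 0. For ξ ∈ W let t·ξ denote the point with coordinates (t·ξ)_i = t^{a_i}·ξ_i (torus action with weights a). Then t·ξ ∈ W and Eord_ξ(J) = Eord_{t·ξ}(J); that is, the E-order function of a binomial ideal is equivariant for the torus action. -/
open MvPolynomial

noncomputable section

/-- The variable index type: `x`-variables indexed by `Fin s`, `y`-variables by `Fin r`. -/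
abbrev BV (s r : ℕ) : Type := Fin s ⊕ Fin r

/-- The polynomial ring `R = K[x_1,…,x_s,y_1,…,y_r]`. -/
abbrev BR (K : Type) [Field K] (s r : ℕ) : Type := MvPolynomial (BV s r) K

variable (K : Type) [Field K] (s r : ℕ)

/-- `W`: the set of points all of whose `y`-coordinates are nonzero. -/
def Wset : Set (BV s r → K) := {ξ | ∀ j : Fin r, ξ (Sum.inr j) ≠ 0}

/-- `I_ξ`: the ideal generated by the variables vanishing at `ξ`. -/
def Ivan (ξ : BV s r → K) : Ideal (BR K s r) :=
  Ideal.span {p : BR K s r | ∃ i : BV s r, ξ i = 0 ∧ p = X i}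

/-- `m_ξ`: the maximal ideal of polynomials vanishing at `ξ`. -/
def mAt (ξ : BV s r → K) : Ideal (BR K s r) := RingHom.ker (eval ξ)

instance mAt_isMaximal (ξ : BV s r → K) : (mAt K s r ξ).IsMaximal :=
  RingHom.ker_isMaximal_of_surjective _ (fun a => ⟨C a, eval_C a⟩)

/-- `O_ξ`: the localization of `R` at `m_ξ`. -/
abbrev Oloc (ξ : BV s r → K) : Type := Localization.AtPrime (mAt K s r ξ)

/-- The `E`-order of an ideal `J` at a point `ξ`:
`sup { m : J·O_ξ ⊆ (I_ξ·O_ξ)^m }`. -/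
def Eord (ξ : BV s r → K) (J : Ideal (BR K s r)) : ℕ∞ :=
  sSup ((fun m : ℕ => (m : ℕ∞)) ''
    {m : ℕ | J.map (algebraMap (BR K s r) (Oloc K s r ξ)) ≤
      ((Ivan K s r ξ).map (algebraMap (BR K s r) (Oloc K s r ξ))) ^ m})

/-- The order of an ideal `J` at a point `ξ`:
`sup { m : J·O_ξ ⊆ (m_ξ·O_ξ)^m }`. -/
def ordAt (ξ : BV s r → K) (J : Ideal (BR K s r)) : ℕ∞ :=
  sSup ((fun m : ℕ => (m : ℕ∞)) ''
    {m : ℕ | J.map (algebraMap (BR K s r) (Oloc K s r ξ)) ≤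
      ((mAt K s r ξ).map (algebraMap (BR K s r) (Oloc K s r ξ))) ^ m})

/-- `x^α`. -/
def xPow (α : Fin s → ℕ) : BR K s r := ∏ i, X (Sum.inl i) ^ α i

/-- `y^γ` for `γ ∈ ℕ^r`. -/
def yPow (γ : Fin r → ℕ) : BR K s r := ∏ j, X (Sum.inr j) ^ γ j

/-- positive part `γ₊` of `γ ∈ ℤ^r`. -/
def ipos (γ : Fin r → ℤ) : Fin r → ℕ := fun j => (γ j).toNat

/-- negative part `γ₋` of `γ ∈ ℤ^r`. -/
def ineg (γ : Fin r → ℤ) : Fin r → ℕ := fun j => (-(γ j)).toNat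

/-- a non-hyperbolic binomial `y^{γ₊}x^α − b·y^{γ₋}x^β`. -/
def nhb (γ : Fin r → ℤ) (α β : Fin s → ℕ) (b : K) : BR K s r :=
  yPow K s r (ipos r γ) * xPow K s r α - C b * yPow K s r (ineg r γ) * xPow K s r β

/-- a hyperbolic equation `y^{δ₋} − μ·y^{δ₊}`. -/
def hyp (δ : Fin r → ℤ) (μ : K) : BR K s r :=
  yPow K s r (ineg r δ) - C μ * yPow K s r (ipos r δ)

/-- a generator of a binomial ideal:
`x^λ(y^{δ₋} − μ y^{δ₊})` or `x^ν(y^{γ₊}x^α − b y^{γ₋}x^β)` with `α,β` of disjoint supports. -/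
def IsBinomGen (g : BR K s r) : Prop :=
  (∃ (lam : Fin s → ℕ) (δ : Fin r → ℤ) (μ : K),
      g = xPow K s r lam * hyp K s r δ μ) ∨
  (∃ (ν α β : Fin s → ℕ) (γ : Fin r → ℤ) (b : K),
      (∀ i, α i = 0 ∨ β i = 0) ∧ g = xPow K s r ν * nhb K s r γ α β b)

/-- a binomial ideal: an ideal generated by finitely many binomial generators. -/
def IsBinomialIdeal (J : Ideal (BR K s r)) : Prop :=
  ∃ S : Finset (BR K s r), (∀ g ∈ S, IsBinomGen K s r g) ∧ J = Ideal.span (S : Set (BR K s r))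

open Classical in
/-- `|ν|_ξ = Σ_{i : ξ_i = 0} ν_i` (sum over vanishing x-coordinates). -/
def nsumAt (ξ : BV s r → K) (ν : Fin s → ℕ) : ℕ :=
  ∑ i, if ξ (Sum.inl i) = 0 then ν i else 0


/-- `Option A ⊕ B ≃ Option (A ⊕ B)`. -/
def optSum (A B : Type) : Option A ⊕ B ≃ Option (A ⊕ B) :=
  ((Equiv.optionEquivSumPUnit A).sumCongr (Equiv.refl B)).trans <|
    (Equiv.sumAssoc A PUnit.{1} B).trans <|
      ((Equiv.refl A).sumCongr (Equiv.sumComm PUnit.{1} B)).trans <|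
        (Equiv.sumAssoc A B PUnit.{1}).symm.trans
          (Equiv.optionEquivSumPUnit (A ⊕ B)).symm

/-- The variables of `K[x_1,…,x_{s+1},y]` split as the variable `x_1` (the `none` case)
and the variables of `K[x_2,…,x_{s+1},y]`. -/
def varEquiv : BV (s + 1) r ≃ Option (BV s r) :=
  ((finSuccEquiv s).sumCongr (Equiv.refl (Fin r))).trans (optSum (Fin s) (Fin r))

/-- Identification of `R = K[x_1,…,x_{s+1},y]` with `R'[x_1]`, `R' = K[x_2,…,x_{s+1},y]`. -/
def toPoly : BR K (s + 1) r ≃ₐ[K] Polynomial (BR K s r) :=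
  (renameEquiv K (varEquiv s r)).trans (optionEquivLeft K (BV s r))

/-- `a_{f,k}`: the coefficient of `x_1^k` in `f` under the identification `R = R'[x_1]`. -/
def coeffAt (f : BR K (s + 1) r) (k : ℕ) : BR K s r :=
  (toPoly K s r f).coeff k

/-- The coefficient ideal `C(P,c)` of `P` along `E` with respect to `V = {x_1 = 0}`,
with factorial normalization: it is generated by the `a_{f,k}^{c!/(c-k)}`, `f ∈ P`, `k < c`. -/
def coeffIdeal (P : Ideal (BR K (s + 1) r)) (c : ℕ) : Ideal (BR K s r) :=
  Ideal.span {g : BR K s r |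
    ∃ f ∈ P, ∃ k < c, g = coeffAt K s r f k ^ (Nat.factorial c / (c - k))}

/-- `ξ'`: the point `ξ` with its first (`x_1`) coordinate removed. -/
def resPt (ξ : BV (s + 1) r → K) : BV s r → K :=
  fun v => match v with
  | Sum.inl i => ξ (Sum.inl i.succ)
  | Sum.inr j => ξ (Sum.inr j)

open Classical in
/-- The chart morphism `σ_j` of the blow-up along `Z = ∩_{i ∈ I} {x_i = 0}`:
`x_i ↦ x_i·x_j` for `i ∈ I ∖ {j}`, all other variables are fixed. -/
def chart (I : Finset (Fin s)) (j : Fin s) : BR K s r →ₐ[K] BR K s r :=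
  aeval (fun v : BV s r => match v with
    | Sum.inl i => if i ∈ I ∧ i ≠ j then X (Sum.inl i) * X (Sum.inl j) else X (Sum.inl i)
    | Sum.inr k => X (Sum.inr k))

end

/-!
The `E`-order at `ξ` only depends on which coordinates of `ξ` vanish, and the torus action
preserves them. Indeed `I_ξ` is spanned by the variables `x_i`, `i ∈ S := {i | ξ_i = 0}`, and
`g ∈ I_ξ^m` iff `T^m` divides the image of `g` under the substitution `x_i ↦ T·x_i` (`i ∈ S`).
A polynomial `u` with `u(ξ) ≠ 0` is sent to a polynomial with nonzero constant term, so primality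
of `T` makes `I_ξ^m` saturated with respect to `R ∖ m_ξ`, whence
`J·O_ξ ⊆ (I_ξ·O_ξ)^m ↔ J ⊆ I_ξ^m`.
-/

namespace MvPolynomial

variable {σ R : Type*} [CommRing R] (S : Set σ)

noncomputable def scaleVars : MvPolynomial σ R →ₐ[R] Polynomial (MvPolynomial σ R) :=
  aeval fun i => Polynomial.C (X i) * Polynomial.X ^ (S.indicator 1 i : ℕ)

@[simp]
theorem scaleVars_X (i : σ) :
    scaleVars S (X i : MvPolynomial σ R) =
      Polynomial.C (X i) * Polynomial.X ^ (S.indicator 1 i : ℕ) :=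
  aeval_X _ i

theorem scaleVars_monomial (d : σ →₀ ℕ) (c : R) :
    scaleVars S (monomial d c) =
      Polynomial.C (monomial d c) * Polynomial.X ^ Finsupp.weight (S.indicator 1) d := by
  induction d using Finsupp.induction with
  | zero => simp [scaleVars, MvPolynomial.algebraMap_eq, Polynomial.algebraMap_apply]
  | single_add i n d _ _ ih =>
    rw [add_comm, monomial_add_single, map_mul, ih, map_add, Finsupp.weight_single, map_pow,
      scaleVars_X, smul_eq_mul, map_mul, map_pow]
    ring

theorem coeff_coeff_scaleVars (g : MvPolynomial σ R) (d : σ →₀ ℕ) :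
    ((scaleVars S g).coeff (Finsupp.weight (S.indicator 1) d)).coeff d = g.coeff d := by
  classical
  induction g using MvPolynomial.induction_on' with
  | monomial e c =>
    rw [scaleVars_monomial, Polynomial.coeff_C_mul, Polynomial.coeff_X_pow, coeff_monomial]
    by_cases hed : e = d
    · simp [hed]
    · split_ifs <;> simp [coeff_monomial, hed]
  | add p q hp hq => simp only [map_add, Polynomial.coeff_add, coeff_add, hp, hq]

theorem monomial_mem_span_X_image_pow (d : σ →₀ ℕ) (c : R) :
    monomial d c ∈ Ideal.span (X '' S) ^ Finsupp.weight (S.indicator 1) d := by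
  induction d using Finsupp.induction with
  | zero => simp
  | single_add i n d _ _ ih =>
    rw [add_comm, monomial_add_single, map_add, Finsupp.weight_single, pow_add, smul_eq_mul]
    refine Ideal.mul_mem_mul ih ?_
    by_cases hi : i ∈ S
    · simpa [hi] using Ideal.pow_mem_pow (Ideal.subset_span (Set.mem_image_of_mem X hi)) n
    · simp [hi]

theorem mem_span_X_image_pow_iff (g : MvPolynomial σ R) (m : ℕ) :
    g ∈ Ideal.span (X '' S) ^ m ↔ Polynomial.X ^ m ∣ scaleVars S g := by
  constructor
  · intro hg
    have hspan : (Ideal.span (X '' S)).map (scaleVars S) ≤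
        Ideal.span {(Polynomial.X : Polynomial (MvPolynomial σ R))} := by
      rw [Ideal.map_span, Ideal.span_le, ← Set.image_comp]
      rintro _ ⟨i, hi, rfl⟩
      simp [scaleVars, hi, Ideal.mem_span_singleton]
    have hg' : scaleVars S g ∈ (Ideal.span (X '' S)).map (scaleVars S) ^ m := by
      rw [← Ideal.map_pow]
      exact Ideal.mem_map_of_mem _ hg
    have := Ideal.pow_right_mono hspan m hg'
    rwa [Ideal.span_singleton_pow, Ideal.mem_span_singleton] at this
  · intro hdvd
    rw [as_sum g]
    refine Ideal.sum_mem _ fun d hd =>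
      Ideal.pow_le_pow_right (not_lt.1 fun hlt => ?_) (monomial_mem_span_X_image_pow S d _)
    rw [Polynomial.X_pow_dvd_iff] at hdvd
    rw [mem_support_iff, ← coeff_coeff_scaleVars S, hdvd _ hlt, coeff_zero] at hd
    exact hd rfl

theorem eval_coeff_zero_scaleVars {ξ : σ → R} (hξ : ∀ i ∈ S, ξ i = 0)
    (u : MvPolynomial σ R) :
    eval ξ ((scaleVars S u).coeff 0) = eval ξ u := by
  suffices (eval ξ).comp ((Polynomial.evalRingHom 0).comp (scaleVars S).toRingHom) = eval ξ by
    simpa [Polynomial.coeff_zero_eq_eval_zero] using RingHom.congr_fun this u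
  refine ringHom_ext (fun c => ?_) (fun i => ?_)
  · simp [scaleVars, MvPolynomial.algebraMap_eq, Polynomial.algebraMap_apply]
  · by_cases hi : i ∈ S <;> simp [scaleVars, hi, hξ]

theorem mem_of_mul_mem_span_X_image_pow [IsDomain R] {u g : MvPolynomial σ R} {m : ℕ}
    (hu : (scaleVars S u).coeff 0 ≠ 0) (h : u * g ∈ Ideal.span (X '' S) ^ m) :
    g ∈ Ideal.span (X '' S) ^ m := by
  rw [mem_span_X_image_pow_iff, map_mul] at *
  exact Polynomial.prime_X.pow_dvd_of_dvd_mul_left m (Polynomial.X_dvd_iff.not.2 hu) h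

end MvPolynomial

theorem IsLocalization.map_le_map_iff_of_saturated {A B : Type*} [CommSemiring A] [CommSemiring B]
    [Algebra A B] (M : Submonoid A) [IsLocalization M B] {I J : Ideal A}
    (hI : ∀ u ∈ M, ∀ g, u * g ∈ I → g ∈ I) :
    J.map (algebraMap A B) ≤ I.map (algebraMap A B) ↔ J ≤ I := by
  refine ⟨fun h g hg => ?_, Ideal.map_mono⟩
  obtain ⟨u, hu, hug⟩ :=
    (algebraMap_mem_map_algebraMap_iff M B I g).1 (h (Ideal.mem_map_of_mem _ hg))
  exact hI u hu g hug

theorem Ivan_eq_span_X_image (K : Type) [Field K] (s r : ℕ) (ξ : BV s r → K) :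
    Ivan K s r ξ = Ideal.span (X '' {i | ξ i = 0}) := by
  simp only [Ivan, Set.image, Set.mem_ofPred_eq, eq_comm (a := X _), and_comm]

theorem mem_Ivan_pow_of_mul_mem (K : Type) [Field K] (s r : ℕ) {ξ : BV s r → K}
    {u g : BR K s r} {m : ℕ} (hu : eval ξ u ≠ 0) (h : u * g ∈ Ivan K s r ξ ^ m) :
    g ∈ Ivan K s r ξ ^ m := by
  rw [Ivan_eq_span_X_image] at h ⊢
  refine mem_of_mul_mem_span_X_image_pow _ (fun h0 => hu ?_) h
  rw [← eval_coeff_zero_scaleVars {i | ξ i = 0} (fun _ hi => hi) u, h0, map_zero]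

theorem Eord_eq_sSup (K : Type) [Field K] (s r : ℕ) (ξ : BV s r → K) (J : Ideal (BR K s r)) :
    Eord K s r ξ J = sSup ((fun m : ℕ => (m : ℕ∞)) '' {m : ℕ | J ≤ Ivan K s r ξ ^ m}) := by
  have hsat (m : ℕ) : ∀ u ∈ (mAt K s r ξ).primeCompl, ∀ g,
      u * g ∈ Ivan K s r ξ ^ m → g ∈ Ivan K s r ξ ^ m :=
    fun _ hu _ => mem_Ivan_pow_of_mul_mem K s r (mt RingHom.mem_ker.2 hu)
  simp only [Eord, ← Ideal.map_pow,
    IsLocalization.map_le_map_iff_of_saturated (mAt K s r ξ).primeCompl (hsat _)]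

theorem Eord_congr (K : Type) [Field K] (s r : ℕ) {ξ η : BV s r → K}
    (h : ∀ i, ξ i = 0 ↔ η i = 0) (J : Ideal (BR K s r)) :
    Eord K s r ξ J = Eord K s r η J := by
  rw [Eord_eq_sSup, Eord_eq_sSup, Ivan_eq_span_X_image, Ivan_eq_span_X_image]
  simp only [h]

theorem Eord_torus_equivariant_general
    (K : Type) [Field K] (s r : ℕ)
    (J : Ideal (BR K s r))
    (a : BV s r → ℤ) (t : K) (ht : t ≠ 0)
    (ξ : BV s r → K) (hξ : ξ ∈ Wset K s r) :
    (fun i => t ^ a i * ξ i) ∈ Wset K s r ∧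
      Eord K s r ξ J = Eord K s r (fun i => t ^ a i * ξ i) J := by
  have hzero : ∀ i, t ^ a i * ξ i = 0 ↔ ξ i = 0 := fun i => by simp [zpow_ne_zero _ ht]
  exact ⟨fun j => (hzero _).not.2 (hξ j), Eord_congr K s r (fun i => (hzero i).symm) J⟩

/-- the `E`-order function of a binomial ideal is equivariant for the torus
action `(t·ξ)_i = t^{a_i}·ξ_i`: for `t ≠ 0` and `ξ ∈ W`, the point `t·ξ` lies in `W` and
`Eord_ξ(J) = Eord_{t·ξ}(J)`. -/
theorem Eord_torus_equivariant
    (K : Type) [Field K] [IsAlgClosed K] (s r : ℕ)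
    (J : Ideal (BR K s r)) (hJ : IsBinomialIdeal K s r J)
    (a : BV s r → ℤ) (t : K) (ht : t ≠ 0)
    (ξ : BV s r → K) (hξ : ξ ∈ Wset K s r) :
    (fun i => t ^ a i * ξ i) ∈ Wset K s r ∧
      Eord K s r ξ J = Eord K s r (fun i => t ^ a i * ξ i) J :=
  Eord_torus_equivariant_general K s r J a t ht ξ hξ
end

section
/- Let f = y^{γ₊}x^α − b·y^{γ₋}x^β be a nonzero non-hyperbolic binomial with b ≠ 0 and α, β of disjoint supports. Then for every point ξ ∈ W, the E-order of f can be computed in terms of the exponents: Eord_ξ(f) = min(|α|_ξ, |β|_ξ). -/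
open MvPolynomial

/-! Weight every variable vanishing at `ξ` by a new variable `t`, i.e. apply the substitution
`x_i ↦ x_i t` from `R` to `R[t]`. It sends `I_ξ^m` into `t^m R[t]`, and it sends
`f = M₁ - M₂`, where `M₁ = y^{γ₊}x^α` and `M₂ = b y^{γ₋}x^β`, to
`M₁ t^{|α|_ξ} - M₂ t^{|β|_ξ} = t^{min} h`, where `h(0)` is `M₁`, `-M₂` or `f` according as
`|α|_ξ < |β|_ξ`, `>` or `=`; in each case `h(0) ≠ 0`. A unit `u` of `O_ξ` goes to a polynomial
whose constant term evaluates to `u(ξ) ≠ 0` at `ξ`. Hence, `R` being a domain, `u f ∈ I_ξ^m`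
forces `m ≤ min(|α|_ξ, |β|_ξ)`; the reverse bound is clear because `x^α ∈ I_ξ^{|α|_ξ}`. -/

namespace Polynomial

variable {A : Type*}

theorem le_of_X_pow_dvd_X_pow_mul [Semiring A] {h : A[X]} {m k : ℕ} (h0 : h.coeff 0 ≠ 0)
    (hd : X ^ m ∣ X ^ k * h) : m ≤ k := by
  by_contra! hlt
  apply h0
  rw [← coeff_X_pow_mul h k 0]
  exact X_pow_dvd_iff.mp hd _ (by omega)

theorem exists_sub_eq_X_pow_min_mul [CommRing A] {u v : A} (hu : u ≠ 0) (hv : v ≠ 0)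
    (huv : u ≠ v) (a c : ℕ) :
    ∃ h : A[X], C u * X ^ a - C v * X ^ c = X ^ min a c * h ∧ h.coeff 0 ≠ 0 := by
  refine ⟨C u * X ^ (a - min a c) - C v * X ^ (c - min a c), ?_, ?_⟩
  · rw [mul_sub, mul_left_comm, ← pow_add, mul_left_comm (X ^ min a c), ← pow_add,
      Nat.add_sub_cancel' (min_le_left a c), Nat.add_sub_cancel' (min_le_right a c)]
  · simp only [coeff_sub, coeff_C_mul_X_pow]
    rcases lt_trichotomy a c with hac | rfl | hca
    · simpa [min_eq_left hac.le, (Nat.sub_pos_of_lt hac).ne] using hu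
    · simpa [sub_eq_zero] using huv
    · simpa [min_eq_right hca.le, (Nat.sub_pos_of_lt hca).ne] using hv

end Polynomial

theorem Ideal.pow_dvd_of_mem_pow {R S : Type*} [CommSemiring R] [CommSemiring S] {F : Type*}
    [FunLike F R S] [RingHomClass F R S] (φ : F) {I : Ideal R} {x : S}
    (hI : I.map φ ≤ Ideal.span {x}) {m : ℕ} {p : R} (hp : p ∈ I ^ m) : x ^ m ∣ φ p := by
  have hmem : φ p ∈ (I.map φ) ^ m := Ideal.map_pow φ I m ▸ Ideal.mem_map_of_mem φ hp
  rw [← Ideal.mem_span_singleton, ← Ideal.span_singleton_pow]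
  exact Ideal.pow_right_mono hI m hmem

theorem IsLocalization.map_span_singleton_le_map_iff {R : Type*} [CommRing R] (M : Submonoid R)
    (S : Type*) [CommRing S] [Algebra R S] [IsLocalization M S] (f : R) (I : Ideal R) :
    (Ideal.span {f}).map (algebraMap R S) ≤ I.map (algebraMap R S) ↔
      ∃ u ∈ M, u * f ∈ I := by
  rw [Ideal.map_span, Set.image_singleton, Ideal.span_singleton_le_iff_mem,
    IsLocalization.algebraMap_mem_map_algebraMap_iff M]

namespace MvPolynomial

variable {σ K : Type*} [CommRing K] (ξ : σ → K)

open Classical in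
noncomputable def weightMap : MvPolynomial σ K →ₐ[K] Polynomial (MvPolynomial σ K) :=
  aeval fun i => Polynomial.C (X i) * Polynomial.X ^ (if ξ i = 0 then 1 else 0)

variable {ξ}

theorem weightMap_X_of_eq_zero {i : σ} (hi : ξ i = 0) :
    weightMap ξ (X i) = Polynomial.C (X i) * Polynomial.X := by
  simp [weightMap, hi]

theorem weightMap_X_of_ne_zero {i : σ} (hi : ξ i ≠ 0) :
    weightMap ξ (X i) = Polynomial.C (X i) := by
  simp [weightMap, hi]

variable (ξ)

theorem weightMap_C (b : K) : weightMap ξ (C b) = Polynomial.C (C b) :=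
  (weightMap ξ).commutes b

theorem eval_coeff_zero_weightMap (p : MvPolynomial σ K) :
    eval ξ ((weightMap ξ p).coeff 0) = eval ξ p := by
  suffices h : (eval ξ).comp ((Polynomial.constantCoeff).comp (weightMap ξ).toRingHom) = eval ξ
    from congrArg (· p) h
  refine ringHom_ext (fun b => by simp) (fun i => ?_)
  by_cases hi : ξ i = 0 <;> simp [weightMap_X_of_eq_zero, weightMap_X_of_ne_zero, hi]

end MvPolynomial

section

variable {K : Type} [Field K] {s r : ℕ}

theorem Eord_eq_of_isGreatest {ξ : BV s r → K} {J : Ideal (BR K s r)} {n : ℕ}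
    (h : IsGreatest {m : ℕ | J.map (algebraMap (BR K s r) (Oloc K s r ξ)) ≤
      (Ivan K s r ξ).map (algebraMap (BR K s r) (Oloc K s r ξ)) ^ m} n) :
    Eord K s r ξ J = n :=
  (Nat.mono_cast.map_isGreatest h).csSup_eq

theorem xPow_ne_zero (ν : Fin s → ℕ) : xPow K s r ν ≠ 0 :=
  Finset.prod_ne_zero_iff.mpr fun _ _ => pow_ne_zero _ (X_ne_zero _)

theorem yPow_ne_zero (δ : Fin r → ℕ) : yPow K s r δ ≠ 0 :=
  Finset.prod_ne_zero_iff.mpr fun _ _ => pow_ne_zero _ (X_ne_zero _)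

theorem X_mem_Ivan {ξ : BV s r → K} {i : BV s r} (hi : ξ i = 0) : X i ∈ Ivan K s r ξ :=
  Ideal.subset_span ⟨i, hi, rfl⟩

theorem xPow_mem_Ivan_pow (ξ : BV s r → K) (ν : Fin s → ℕ) :
    xPow K s r ν ∈ Ivan K s r ξ ^ nsumAt K s r ξ ν := by
  classical
  rw [xPow, nsumAt, ← Finset.prod_pow_eq_pow_sum]
  refine Ideal.prod_mem_prod fun i _ => ?_
  split_ifs with hi
  · exact Ideal.pow_mem_pow (X_mem_Ivan hi) _
  · simp

theorem map_Ivan_weightMap_le (ξ : BV s r → K) :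
    (Ivan K s r ξ).map (weightMap ξ) ≤ Ideal.span {Polynomial.X} := by
  rw [Ivan, Ideal.map_span, Ideal.span_le]
  rintro _ ⟨_, ⟨i, hi, rfl⟩, rfl⟩
  rw [SetLike.mem_coe, Ideal.mem_span_singleton, weightMap_X_of_eq_zero hi]
  exact dvd_mul_left _ _

theorem weightMap_xPow (ξ : BV s r → K) (ν : Fin s → ℕ) :
    weightMap ξ (xPow K s r ν) =
      Polynomial.C (xPow K s r ν) * Polynomial.X ^ nsumAt K s r ξ ν := by
  classical
  simp only [xPow, nsumAt, map_prod, map_pow, ← Finset.prod_pow_eq_pow_sum,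
    ← Finset.prod_mul_distrib]
  refine Finset.prod_congr rfl fun i _ => ?_
  by_cases hi : ξ (Sum.inl i) = 0
  · simp [weightMap_X_of_eq_zero hi, hi, mul_pow]
  · simp [weightMap_X_of_ne_zero hi, hi]

theorem weightMap_yPow {ξ : BV s r → K} (hξ : ξ ∈ Wset K s r) (δ : Fin r → ℕ) :
    weightMap ξ (yPow K s r δ) = Polynomial.C (yPow K s r δ) := by
  simp only [yPow, map_prod, map_pow, weightMap_X_of_ne_zero (hξ _)]

variable (γ : Fin r → ℤ) (α β : Fin s → ℕ) (b : K)

theorem nhb_mem_Ivan_pow (ξ : BV s r → K) :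
    nhb K s r γ α β b ∈ Ivan K s r ξ ^ min (nsumAt K s r ξ α) (nsumAt K s r ξ β) :=
  sub_mem
    (Ideal.pow_le_pow_right (min_le_left _ _) (Ideal.mul_mem_left _ _ (xPow_mem_Ivan_pow ξ α)))
    (Ideal.pow_le_pow_right (min_le_right _ _) (Ideal.mul_mem_left _ _ (xPow_mem_Ivan_pow ξ β)))

theorem weightMap_nhb {ξ : BV s r → K} (hξ : ξ ∈ Wset K s r) :
    weightMap ξ (nhb K s r γ α β b) =
      Polynomial.C (yPow K s r (ipos r γ) * xPow K s r α) * Polynomial.X ^ nsumAt K s r ξ α -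
        Polynomial.C (C b * yPow K s r (ineg r γ) * xPow K s r β) *
          Polynomial.X ^ nsumAt K s r ξ β := by
  simp only [nhb, map_sub, map_mul, weightMap_C, weightMap_yPow hξ, weightMap_xPow]
  ring

variable {γ α β b}

theorem le_min_of_mul_nhb_mem_Ivan_pow {ξ : BV s r → K} (hξ : ξ ∈ Wset K s r) (hb : b ≠ 0)
    (hne : nhb K s r γ α β b ≠ 0) {u : BR K s r} (hu : eval ξ u ≠ 0) {m : ℕ}
    (hm : u * nhb K s r γ α β b ∈ Ivan K s r ξ ^ m) :
    m ≤ min (nsumAt K s r ξ α) (nsumAt K s r ξ β) := by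
  obtain ⟨h, hfh, hh0⟩ := Polynomial.exists_sub_eq_X_pow_min_mul
    (mul_ne_zero (yPow_ne_zero _) (xPow_ne_zero _))
    (mul_ne_zero (mul_ne_zero (C_ne_zero.mpr hb) (yPow_ne_zero _)) (xPow_ne_zero _))
    (sub_ne_zero.mp hne) (nsumAt K s r ξ α) (nsumAt K s r ξ β)
  have hu0 : (weightMap ξ u).coeff 0 ≠ 0 := fun h0 => hu <| by
    rw [← eval_coeff_zero_weightMap ξ u, h0, map_zero]
  have hdvd := Ideal.pow_dvd_of_mem_pow (weightMap ξ) (map_Ivan_weightMap_le ξ) hm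
  rw [map_mul, weightMap_nhb γ α β b hξ, hfh, mul_left_comm] at hdvd
  refine Polynomial.le_of_X_pow_dvd_X_pow_mul ?_ hdvd
  rw [Polynomial.mul_coeff_zero]
  exact mul_ne_zero hu0 hh0

end

theorem Eord_eq_min_of_exponents_general
    (K : Type) [Field K] (s r : ℕ)
    (γ : Fin r → ℤ) (α β : Fin s → ℕ) (b : K) (hb : b ≠ 0)
    (hne : nhb K s r γ α β b ≠ 0)
    (ξ : BV s r → K) (hξ : ξ ∈ Wset K s r) :
    Eord K s r ξ (Ideal.span {nhb K s r γ α β b}) =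
      (min (nsumAt K s r ξ α) (nsumAt K s r ξ β) : ℕ∞) := by
  have hmap (m : ℕ) :
      (Ideal.span {nhb K s r γ α β b}).map (algebraMap (BR K s r) (Oloc K s r ξ)) ≤
          (Ivan K s r ξ).map (algebraMap (BR K s r) (Oloc K s r ξ)) ^ m ↔
        ∃ u ∈ (mAt K s r ξ).primeCompl, u * nhb K s r γ α β b ∈ Ivan K s r ξ ^ m := by
    rw [← Ideal.map_pow, IsLocalization.map_span_singleton_le_map_iff (mAt K s r ξ).primeCompl]
  rw [← Nat.mono_cast.map_min]
  refine Eord_eq_of_isGreatest ⟨?_, fun m hm => ?_⟩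
  · exact (hmap _).mpr ⟨1, one_mem _, by
      simpa only [one_mul] using nhb_mem_Ivan_pow γ α β b ξ⟩
  · obtain ⟨u, hu, hmem⟩ := (hmap m).mp hm
    exact le_min_of_mul_nhb_mem_Ivan_pow hξ hb hne (mt RingHom.mem_ker.mpr hu) hmem

/-- for a nonzero non-hyperbolic binomial `f = y^{γ₊}x^α − b·y^{γ₋}x^β` with
`b ≠ 0` and `α, β` of disjoint supports, the `E`-order can be computed from the exponents:
`Eord_ξ(f) = min(|α|_ξ, |β|_ξ)` for every `ξ ∈ W`. -/
theorem Eord_eq_min_of_exponents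
    (K : Type) [Field K] [IsAlgClosed K] (s r : ℕ)
    (γ : Fin r → ℤ) (α β : Fin s → ℕ) (b : K) (hb : b ≠ 0)
    (hdisj : ∀ i, α i = 0 ∨ β i = 0)
    (hne : nhb K s r γ α β b ≠ 0)
    (ξ : BV s r → K) (hξ : ξ ∈ Wset K s r) :
    Eord K s r ξ (Ideal.span {nhb K s r γ α β b}) =
      (min (nsumAt K s r ξ α) (nsumAt K s r ξ β) : ℕ∞) :=
  Eord_eq_min_of_exponents_general K s r γ α β b hb hne ξ hξ
end

section
/- Let f = y^{γ₊}x^α − b·y^{γ₋}x^β be a non-hyperbolic binomial with b ≠ 0, α, β of disjoint supports and 0 < |α| ≤ |β|. Let I ⊆ {1,…,s} be a set of x-indices with supp(α) ⊆ I and Σ_{i∈I} β_i ≥ |α|. Fix j ∈ I with β_j > 0 (hence α_j = 0) and let σ_j : R → R be the K-algebra homomorphism sending x_i ↦ x_i·x_j for each i ∈ I∖{j} and fixing x_j, the remaining x-variables and all y-variables (the j-th chart of the blow-up along Z = ∩_{i∈I}{x_i = 0}). Then σ_j(f) = x_j^{|α|}·g, where the weak transform g equals y^{γ₊}x^{α}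 − b·y^{γ₋}x^{β − β_j e_j}·x_j^{(Σ_{i∈I}β_i) − |α|}; for every point ξ ∈ W one has Eord_ξ(g) ≤ |α|; and every ξ ∈ W with Eord_ξ(g) = |α| satisfies ξ_i = 0 for all i with α_i > 0. (Thus the maximal E-order does not increase, and when it remains constant the strict transform of a coordinate hypersurface {x_i = 0} with α_i > 0 again contains the locus of maximal E-order: stability of hypersurfaces of E-maximal contact under blowing up.) -/
open MvPolynomial

noncomputable section AuxLemmas

variable (K : Type) [Field K] (s r : ℕ)

open Classical in
def PhiB (ξ : BV s r → K) : BR K s r →ₐ[K] Polynomial (BR K s r) :=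
  aeval (fun v : BV s r =>
    if ξ v = 0 then Polynomial.C (X v) * Polynomial.X else Polynomial.C (X v))

open Classical in
lemma PhiB_X (ξ : BV s r → K) (v : BV s r) :
    PhiB K s r ξ (X v) = Polynomial.C (X v) * Polynomial.X ^ (if ξ v = 0 then 1 else 0) := by
  simp only [PhiB, aeval_X]
  split_ifs <;> simp

open Classical in
lemma PhiB_xPow (ξ : BV s r → K) (α : Fin s → ℕ) :
    PhiB K s r ξ (xPow K s r α) =
      Polynomial.C (xPow K s r α) * Polynomial.X ^ nsumAt K s r ξ α := by
  simp only [xPow]; rw [map_prod]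
  have : ∀ i : Fin s, PhiB K s r ξ (X (Sum.inl i) ^ α i) =
      Polynomial.C (X (Sum.inl i : BV s r) ^ α i) *
        Polynomial.X ^ ((if ξ (Sum.inl i) = 0 then 1 else 0) * α i) := by
    intro i
    rw [map_pow, PhiB_X, mul_pow, ← pow_mul, ← Polynomial.C_pow]
  rw [Finset.prod_congr rfl (fun i _ => this i), Finset.prod_mul_distrib, ← map_prod,
    Finset.prod_pow_eq_pow_sum]
  have hs : (∑ i : Fin s, (if ξ (Sum.inl i) = 0 then 1 else 0) * α i) = nsumAt K s r ξ α := by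
    simp only [nsumAt]
    exact Finset.sum_congr rfl fun i _ => by split_ifs <;> simp
  rw [hs]

lemma PhiB_yPow (ξ : BV s r → K) (hW : ξ ∈ Wset K s r) (δ : Fin r → ℕ) :
    PhiB K s r ξ (yPow K s r δ) = Polynomial.C (yPow K s r δ) := by
  simp only [yPow]; rw [map_prod, map_prod]
  refine Finset.prod_congr rfl fun k _ => ?_
  rw [map_pow, PhiB_X, if_neg (hW k), pow_zero, mul_one, map_pow]

open Classical in
lemma PhiB_Xpow (ξ : BV s r → K) (j : Fin s) (e : ℕ) :
    PhiB K s r ξ (X (Sum.inl j) ^ e) =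
      Polynomial.C ((X (Sum.inl j) : BR K s r) ^ e) *
        Polynomial.X ^ ((if ξ (Sum.inl j) = 0 then 1 else 0) * e) := by
  rw [map_pow, PhiB_X, mul_pow, ← pow_mul, ← Polynomial.C_pow]

lemma PhiB_C (ξ : BV s r → K) (a : K) : PhiB K s r ξ (C a) = Polynomial.C (C a) := by
  simp [PhiB]

lemma Ivan_pow_le (ξ : BV s r → K) (m : ℕ) :
    Ivan K s r ξ ^ m ≤
      Ideal.comap (PhiB K s r ξ) (Ideal.span {(Polynomial.X : Polynomial (BR K s r)) ^ m}) := by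
  classical
  have h1 : Ivan K s r ξ ≤
      Ideal.comap (PhiB K s r ξ) (Ideal.span {(Polynomial.X : Polynomial (BR K s r))}) := by
    rw [Ivan, Ideal.span_le]
    rintro p ⟨v, hv, rfl⟩
    rw [SetLike.mem_coe, Ideal.mem_comap, Ideal.mem_span_singleton, PhiB_X, if_pos hv, pow_one]
    exact ⟨Polynomial.C (X v), mul_comm _ _⟩
  calc Ivan K s r ξ ^ m
      ≤ (Ideal.comap (PhiB K s r ξ) (Ideal.span {(Polynomial.X : Polynomial (BR K s r))})) ^ m :=
        Ideal.pow_right_mono h1 m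
    _ ≤ Ideal.comap (PhiB K s r ξ)
        ((Ideal.span {(Polynomial.X : Polynomial (BR K s r))}) ^ m) := by
        rw [← Ideal.map_le_iff_le_comap, Ideal.map_pow]
        exact Ideal.pow_right_mono Ideal.map_comap_le m
    _ = _ := by rw [Ideal.span_singleton_pow]

lemma PhiB_eval (ξ : BV s r → K) (p : BR K s r) :
    eval ξ ((PhiB K s r ξ p).eval 0) = eval ξ p := by
  classical
  have : ((eval ξ).comp ((Polynomial.evalRingHom (0 : BR K s r)).comp
      (PhiB K s r ξ).toRingHom)) = eval ξ := by
    apply MvPolynomial.ringHom_ext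
    · intro a; simp [PhiB_C]
    · intro v
      simp only [RingHom.comp_apply, AlgHom.toRingHom_eq_coe, RingHom.coe_coe, PhiB_X,
        Polynomial.coe_evalRingHom]
      split_ifs with h <;> simp [h]
  exact congrFun (congrArg (fun f => f.toFun) this) p


open Classical in
lemma key_le (ξ : BV s r → K) (hW : ξ ∈ Wset K s r) {b : K} (hb : b ≠ 0)
    (γp γn : Fin r → ℕ) (α β' : Fin s → ℕ) (j : Fin s) (e : ℕ) (i0 : Fin s)
    (hαi0 : α i0 ≠ 0) (hβ'i0 : β' i0 = 0) (hji0 : j ≠ i0) (m : ℕ)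
    (hm : (Ideal.span {yPow K s r γp * xPow K s r α -
        C b * yPow K s r γn * xPow K s r β' * X (Sum.inl j) ^ e}).map
        (algebraMap (BR K s r) (Oloc K s r ξ)) ≤
      ((Ivan K s r ξ).map (algebraMap (BR K s r) (Oloc K s r ξ))) ^ m) :
    m ≤ nsumAt K s r ξ α := by
  set g : BR K s r := yPow K s r γp * xPow K s r α -
      C b * yPow K s r γn * xPow K s r β' * X (Sum.inl j) ^ e with hgdef
  rw [← Ideal.map_pow] at hm
  have hg : algebraMap (BR K s r) (Oloc K s r ξ) g ∈
      ((Ivan K s r ξ) ^ m).map (algebraMap (BR K s r) (Oloc K s r ξ)) :=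
    hm (Ideal.mem_map_of_mem _ (Ideal.mem_span_singleton_self g))
  obtain ⟨⟨a, u⟩, hau⟩ :=
    (IsLocalization.mem_map_algebraMap_iff (mAt K s r ξ).primeCompl (Oloc K s r ξ)).mp hg
  have hinj : Function.Injective (algebraMap (BR K s r) (Oloc K s r ξ)) :=
    IsLocalization.injective _ (mAt K s r ξ).primeCompl_le_nonZeroDivisors
  have hgu : g * (u : BR K s r) = (a : BR K s r) := by
    apply hinj; rw [map_mul]; exact hau
  have hXgu : (Polynomial.X : Polynomial (BR K s r)) ^ m ∣ PhiB K s r ξ (g * u) :=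
    Ideal.mem_span_singleton.mp (Ivan_pow_le K s r ξ m (hgu ▸ a.2))
  have hu0 : eval ξ (u : BR K s r) ≠ 0 := u.2
  have hXu : ¬ ((Polynomial.X : Polynomial (BR K s r)) ∣ PhiB K s r ξ (u : BR K s r)) := by
    rintro ⟨q, hq⟩
    apply hu0
    have h := PhiB_eval K s r ξ (u : BR K s r)
    rw [hq] at h
    simpa using h.symm
  have hXg : (Polynomial.X : Polynomial (BR K s r)) ^ m ∣ PhiB K s r ξ g := by
    rw [map_mul] at hXgu
    exact (Polynomial.prime_X).pow_dvd_of_dvd_mul_right m hXu hXgu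
  have hA : PhiB K s r ξ (yPow K s r γp * xPow K s r α) =
      Polynomial.C (yPow K s r γp * xPow K s r α) * Polynomial.X ^ nsumAt K s r ξ α := by
    simp only [map_mul, PhiB_yPow K s r ξ hW, PhiB_xPow]
    ring
  have hB : PhiB K s r ξ (C b * yPow K s r γn * xPow K s r β' * X (Sum.inl j) ^ e) =
      Polynomial.C (C b * yPow K s r γn * xPow K s r β' * X (Sum.inl j) ^ e) *
        Polynomial.X ^ (nsumAt K s r ξ β' + (if ξ (Sum.inl j) = 0 then 1 else 0) * e) := by
    simp only [map_mul, PhiB_C, PhiB_yPow K s r ξ hW, PhiB_xPow, PhiB_Xpow]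
    ring
  have hPhig : PhiB K s r ξ g =
      Polynomial.C (yPow K s r γp * xPow K s r α) * Polynomial.X ^ nsumAt K s r ξ α -
      Polynomial.C (C b * yPow K s r γn * xPow K s r β' * X (Sum.inl j) ^ e) *
        Polynomial.X ^ (nsumAt K s r ξ β' + (if ξ (Sum.inl j) = 0 then 1 else 0) * e) := by
    rw [hgdef, map_sub, hA, hB]
  by_contra hlt
  push_neg at hlt
  have hc : (PhiB K s r ξ g).coeff (nsumAt K s r ξ α) = 0 :=
    (Polynomial.X_pow_dvd_iff.mp hXg) _ hlt
  rw [hPhig, Polynomial.coeff_sub, Polynomial.coeff_C_mul, Polynomial.coeff_C_mul,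
    Polynomial.coeff_X_pow, Polynomial.coeff_X_pow, if_pos rfl, mul_one] at hc
  set pt : BV s r → K := fun v => if v = Sum.inl i0 then 0 else 1 with hpt
  have hev1 : eval pt (yPow K s r γp * xPow K s r α) = 0 := by
    rw [map_mul]
    have hx : eval pt (xPow K s r α) = 0 := by
      rw [xPow, map_prod]
      refine Finset.prod_eq_zero (Finset.mem_univ i0) ?_
      rw [map_pow, eval_X]
      simp [hpt, zero_pow hαi0]
    rw [hx, mul_zero]
  by_cases hw : nsumAt K s r ξ α =
      nsumAt K s r ξ β' + (if ξ (Sum.inl j) = 0 then 1 else 0) * e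
  · rw [if_pos hw, mul_one, sub_eq_zero] at hc
    have hev2 : eval pt (C b * yPow K s r γn * xPow K s r β' * X (Sum.inl j) ^ e) = b := by
      have h1 : eval pt (yPow K s r γn) = 1 := by
        rw [yPow, map_prod]
        refine Finset.prod_eq_one fun k _ => ?_
        rw [map_pow, eval_X]
        simp [hpt]
      have h2 : eval pt (xPow K s r β') = 1 := by
        rw [xPow, map_prod]
        refine Finset.prod_eq_one fun i _ => ?_
        rw [map_pow, eval_X]
        by_cases hi : i = i0
        · subst hi; simp [hβ'i0]
        · simp [hpt, hi]
      have h3 : eval pt ((X (Sum.inl j) : BR K s r) ^ e) = 1 := by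
        rw [map_pow, eval_X]
        simp [hpt, hji0]
      rw [map_mul, map_mul, map_mul, eval_C, h1, h2, h3, mul_one, mul_one, mul_one]
    have heq := congrArg (eval pt) hc
    rw [hev1, hev2] at heq
    exact hb heq.symm
  · rw [if_neg hw, mul_zero, sub_zero] at hc
    have heq := congrArg (eval (fun _ : BV s r => (1 : K))) hc
    simp [yPow, xPow] at heq


open Classical in
lemma chart_X_inl (I : Finset (Fin s)) (j : Fin s) (i : Fin s) :
    chart K s r I j (X (Sum.inl i)) =
      if i ∈ I ∧ i ≠ j then X (Sum.inl i) * X (Sum.inl j) else X (Sum.inl i) := by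
  simp [chart]

lemma chart_X_inr (I : Finset (Fin s)) (j : Fin s) (k : Fin r) :
    chart K s r I j (X (Sum.inr k)) = X (Sum.inr k) := by
  simp [chart]

lemma chart_C' (I : Finset (Fin s)) (j : Fin s) (b : K) :
    chart K s r I j (C b) = C b := by
  simp [chart, algebraMap_eq]

lemma chart_yPow (I : Finset (Fin s)) (j : Fin s) (δ : Fin r → ℕ) :
    chart K s r I j (yPow K s r δ) = yPow K s r δ := by
  simp only [yPow, map_prod, map_pow]
  exact Finset.prod_congr rfl fun k _ => by rw [chart_X_inr]

open Classical in
lemma chart_xPow (I : Finset (Fin s)) (j : Fin s) (ν : Fin s → ℕ) :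
    chart K s r I j (xPow K s r ν) =
      xPow K s r ν * X (Sum.inl j) ^ ∑ i, if i ∈ I ∧ i ≠ j then ν i else 0 := by
  simp only [xPow, map_prod, map_pow]
  have h : ∀ i : Fin s, (chart K s r I j (X (Sum.inl i))) ^ ν i =
      X (Sum.inl i) ^ ν i * X (Sum.inl j) ^ (if i ∈ I ∧ i ≠ j then ν i else 0) := by
    intro i
    rw [chart_X_inl]
    split_ifs with h
    · rw [mul_pow]
    · rw [pow_zero, mul_one]
  rw [Finset.prod_congr rfl fun i _ => h i, Finset.prod_mul_distrib,
    Finset.prod_pow_eq_pow_sum]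

lemma xPow_split (β : Fin s → ℕ) (j : Fin s) :
    xPow K s r β = xPow K s r (Function.update β j 0) * X (Sum.inl j) ^ β j := by
  classical
  simp only [xPow]
  rw [← Finset.prod_erase_mul Finset.univ (fun i => (X (Sum.inl i) : BR K s r) ^ β i)
      (Finset.mem_univ j),
    ← Finset.prod_erase_mul Finset.univ
      (fun i => (X (Sum.inl i) : BR K s r) ^ Function.update β j 0 i) (Finset.mem_univ j),
    Function.update_self, pow_zero, mul_one]
  congr 1
  exact Finset.prod_congr rfl fun i hi => by
    rw [Function.update_of_ne (Finset.ne_of_mem_erase hi)]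

end AuxLemmas

/-- in the `j`-th chart of the blow-up along `Z = ∩_{i∈I}{x_i = 0}` with
`supp(α) ⊆ I`, `Σ_{i∈I}β_i ≥ |α|`, `j ∈ I` and `β_j > 0` (hence `α_j = 0`), the
non-hyperbolic binomial `f = y^{γ₊}x^α − b·y^{γ₋}x^β` (with `b ≠ 0`, disjoint supports,
`0 < |α| ≤ |β|`) transforms as `σ_j(f) = x_j^{|α|}·g` with weak transform
`g = y^{γ₊}x^α − b·y^{γ₋}x^{β−β_j e_j} x_j^{(Σ_{i∈I}β_i)−|α|}`; moreover `Eord_ξ(g) ≤ |α|`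
for every `ξ ∈ W`, and every `ξ ∈ W` with `Eord_ξ(g) = |α|` satisfies `ξ_i = 0` for all `i`
with `α_i > 0` (stability of hypersurfaces of `E`-maximal contact under blowing up). -/
theorem chart_weak_transform_Eord_stable
    (K : Type) [Field K] [IsAlgClosed K] (s r : ℕ)
    (γ : Fin r → ℤ) (α β : Fin s → ℕ) (b : K) (hb : b ≠ 0)
    (hdisj : ∀ i, α i = 0 ∨ β i = 0)
    (hα : 0 < ∑ i, α i) (hαβ : ∑ i, α i ≤ ∑ i, β i)
    (I : Finset (Fin s)) (hsupp : ∀ i, α i ≠ 0 → i ∈ I)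
    (hβI : ∑ i, α i ≤ ∑ i ∈ I, β i)
    (j : Fin s) (hj : j ∈ I) (hβj : 0 < β j) :
    chart K s r I j (nhb K s r γ α β b) =
        X (Sum.inl j) ^ (∑ i, α i) *
          (yPow K s r (ipos r γ) * xPow K s r α -
            C b * yPow K s r (ineg r γ) * xPow K s r (Function.update β j 0) *
              X (Sum.inl j) ^ ((∑ i ∈ I, β i) - ∑ i, α i)) ∧
      (∀ ξ ∈ Wset K s r,
        Eord K s r ξ (Ideal.span
          {yPow K s r (ipos r γ) * xPow K s r α -
            C b * yPow K s r (ineg r γ) * xPow K s r (Function.update β j 0) *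
              X (Sum.inl j) ^ ((∑ i ∈ I, β i) - ∑ i, α i)}) ≤ ((∑ i, α i : ℕ) : ℕ∞)) ∧
      (∀ ξ ∈ Wset K s r,
        Eord K s r ξ (Ideal.span
          {yPow K s r (ipos r γ) * xPow K s r α -
            C b * yPow K s r (ineg r γ) * xPow K s r (Function.update β j 0) *
              X (Sum.inl j) ^ ((∑ i ∈ I, β i) - ∑ i, α i)}) = ((∑ i, α i : ℕ) : ℕ∞) →
          ∀ i, 0 < α i → ξ (Sum.inl i) = 0) := by
  classical
  have hαj : α j = 0 := (hdisj j).resolve_right hβj.ne'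
  have hβjle : β j ≤ ∑ i ∈ I, β i :=
    Finset.single_le_sum (fun i _ => Nat.zero_le _) hj
  constructor
  · -- the chart computation
    have e1 : (∑ i, if i ∈ I ∧ i ≠ j then α i else 0) = ∑ i, α i := by
      refine Finset.sum_congr rfl fun i _ => ?_
      by_cases h : i ∈ I ∧ i ≠ j
      · rw [if_pos h]
      · rw [if_neg h]
        rcases Classical.em (i ∈ I) with hiI | hiI
        · have hij : i = j := by tauto
          rw [hij, hαj]
        · by_contra h0
          exact hiI (hsupp i fun hz => h0 hz.symm)
    have e2 : (∑ i, if i ∈ I ∧ i ≠ j then β i else 0) = ∑ i ∈ I, β i - β j := by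
      have hfil : Finset.univ.filter (fun i : Fin s => i ∈ I ∧ i ≠ j) = I.erase j := by
        ext i
        simp [Finset.mem_erase, and_comm]
      rw [← Finset.sum_filter, hfil]
      have h5 := Finset.add_sum_erase I β hj
      omega
    have e4 : (X (Sum.inl j) : BR K s r) ^ β j * X (Sum.inl j) ^ (∑ i ∈ I, β i - β j) =
        X (Sum.inl j) ^ (∑ i, α i) * X (Sum.inl j) ^ (∑ i ∈ I, β i - ∑ i, α i) := by
      rw [← pow_add, ← pow_add, Nat.add_sub_cancel' hβjle, Nat.add_sub_cancel' hβI]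
    rw [nhb, map_sub, map_mul, map_mul, map_mul, chart_yPow, chart_yPow, chart_xPow,
      chart_xPow, chart_C', e1, e2, xPow_split K s r β j]
    linear_combination (-(C b * yPow K s r (ineg r γ) * xPow K s r (Function.update β j 0))) * e4
  · -- the E-order bounds
    obtain ⟨i0, -, hi0⟩ := Finset.exists_ne_zero_of_sum_ne_zero hα.ne'
    have hkey : ∀ (i1 : Fin s), α i1 ≠ 0 → ∀ ξ ∈ Wset K s r,
        Eord K s r ξ (Ideal.span
          {yPow K s r (ipos r γ) * xPow K s r α -
            C b * yPow K s r (ineg r γ) * xPow K s r (Function.update β j 0) *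
              X (Sum.inl j) ^ ((∑ i ∈ I, β i) - ∑ i, α i)}) ≤
          ((nsumAt K s r ξ α : ℕ) : ℕ∞) := by
      intro i1 hi1 ξ hW
      have hji1 : j ≠ i1 := fun h => hi1 (h ▸ hαj)
      have hβ'i1 : Function.update β j 0 i1 = 0 := by
        rw [Function.update_of_ne (Ne.symm hji1)]
        exact (hdisj i1).resolve_left hi1
      refine sSup_le ?_
      rintro x ⟨m, hm, rfl⟩
      exact Nat.cast_le.mpr
        (key_le K s r ξ hW hb (ipos r γ) (ineg r γ) α (Function.update β j 0) j
          ((∑ i ∈ I, β i) - ∑ i, α i) i1 hi1 hβ'i1 hji1 m hm)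
    have hnle : ∀ ξ : BV s r → K, nsumAt K s r ξ α ≤ ∑ i, α i := by
      intro ξ
      simp only [nsumAt]
      exact Finset.sum_le_sum fun i _ => by split_ifs <;> omega
    constructor
    · intro ξ hW
      exact le_trans (hkey i0 hi0 ξ hW) (Nat.cast_le.mpr (hnle ξ))
    · intro ξ hW hEq i hi
      by_contra hne
      have hlt : nsumAt K s r ξ α < ∑ i, α i := by
        simp only [nsumAt]
        refine Finset.sum_lt_sum (fun k _ => by split_ifs <;> omega)
          ⟨i, Finset.mem_univ i, ?_⟩
        rw [if_neg hne]
        exact hi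
      have h2 := hkey i hi.ne' ξ hW
      rw [hEq] at h2
      exact absurd (Nat.cast_le.mp h2) (by omega)
end
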